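/- arXiv:1210.2293 — 2 statements merged into one kernel-verified Lean document; each statement's English description precedes it below -/
import Mathlib

section
/- Let x₀ ∈ ℝ³, let c : ℝ³ → ℝ be twice continuously differentiable, and let x ∈ ℝ³ be a point where c(x) ≥ c₀ for some c₀ > 0. Suppose ρ ∈ (0, c₀) and that the pseudo-convexity condition (3/2) |∇ log c(x)| |x − x₀| ≤ 1 − ρ/c₀ holds at x, i.e. (3/2)(|∇c(x)|/c(x)) |x − x₀| ≤ 1 − ρ/c₀. Define ψ₀(x) = |x - x₀|² and a(x,ξ) = c(x)|ξ|². Then for every ξ ∈ ℝ³ one has (1/4){a,{a,ψ₀}}(x,ξ) ≥ 2 ρ c(x) |ξ|². -/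
noncomputable section

/-- The Poisson bracket `{p,q}(x,ξ) = Σᵢ (∂p/∂ξᵢ)(∂q/∂xᵢ) − (∂p/∂xᵢ)(∂q/∂ξᵢ)` of two
functions `p q : ℝ³ × ℝ³ → ℝ` (written in curried form). -/
def poissonBracket (p q : EuclideanSpace ℝ (Fin 3) → EuclideanSpace ℝ (Fin 3) → ℝ)
    (x ξ : EuclideanSpace ℝ (Fin 3)) : ℝ :=
  ∑ i : Fin 3,
    (fderiv ℝ (p x) ξ (EuclideanSpace.single i 1) *
        fderiv ℝ (fun x' => q x' ξ) x (EuclideanSpace.single i 1) -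
      fderiv ℝ (fun x' => p x' ξ) x (EuclideanSpace.single i 1) *
        fderiv ℝ (q x) ξ (EuclideanSpace.single i 1))

open scoped RealInnerProductSpace

local notation "E3" => EuclideanSpace ℝ (Fin 3)

lemma aux_fderiv_grad (f : E3 → ℝ) (x v : E3) : fderiv ℝ f x v = ⟪gradient f x, v⟫ := by
  rw [gradient, InnerProductSpace.toDual_symm_apply]

lemma aux_fderiv_const_mul_norm_sq (a : ℝ) (ξ v : E3) :
    fderiv ℝ (fun η => a * ‖η‖ ^ 2) ξ v = 2 * a * ⟪ξ, v⟫ := by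
  have h := ((hasStrictFDerivAt_norm_sq ξ).hasFDerivAt).const_mul a
  rw [h.fderiv]
  simp [two_smul, real_inner_smul_left]
  ring

lemma aux_fderiv_norm_sub_sq (x₀ x v : E3) :
    fderiv ℝ (fun y => ‖y - x₀‖ ^ 2) x v = 2 * ⟪x - x₀, v⟫ := by
  have h : HasFDerivAt (fun y : E3 => ‖y - x₀‖ ^ 2)
      (2 • (innerSL ℝ (x - x₀)).comp (ContinuousLinearMap.id ℝ E3)) x :=
    HasFDerivAt.norm_sq ((hasFDerivAt_id x).sub_const x₀)
  rw [h.fderiv]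
  simp [two_smul, sub_mul, Finset.sum_sub_distrib]
  rw [inner_sub_left]
  ring

lemma aux_inner_single (v : E3) (i : Fin 3) : ⟪v, EuclideanSpace.single i (1:ℝ)⟫ = v i := by
  simp [EuclideanSpace.inner_single_right]

lemma aux_inner_single' (v : E3) (i : Fin 3) : ⟪EuclideanSpace.single i (1:ℝ), v⟫ = v i := by
  simp [EuclideanSpace.inner_single_left]

lemma aux_real_inner_sum (v w : E3) : ⟪v, w⟫ = ∑ i : Fin 3, v i * w i := by
  simp [PiLp.inner_apply, RCLike.inner_apply]
  exact Finset.sum_congr rfl fun i _ => mul_comm _ _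

/-- Closed form of the inner bracket. -/
lemma inner_bracket_eq (x₀ : E3) (c : E3 → ℝ) (y η : E3) :
    poissonBracket (fun y η => c y * ‖η‖ ^ 2) (fun y _ => ‖y - x₀‖ ^ 2) y η
      = 4 * c y * ⟪η, y - x₀⟫ := by
  unfold poissonBracket
  have h1 : ∀ i : Fin 3, fderiv ℝ (fun η' => c y * ‖η'‖ ^ 2) η (EuclideanSpace.single i 1)
      = 2 * c y * η i := fun i => by
    rw [aux_fderiv_const_mul_norm_sq, aux_inner_single]
  have h2 : ∀ i : Fin 3, fderiv ℝ (fun y' => ‖y' - x₀‖ ^ 2) y (EuclideanSpace.single i 1)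
      = 2 * (y - x₀) i := fun i => by
    rw [aux_fderiv_norm_sub_sq, aux_inner_single]
  have h3 : fderiv ℝ (fun _ : E3 => ‖y - x₀‖ ^ 2) η = 0 := fderiv_const_apply _
  simp only [h1, h2, h3, ContinuousLinearMap.zero_apply, mul_zero, sub_zero]
  rw [aux_real_inner_sum, Finset.mul_sum]
  apply Finset.sum_congr rfl
  intro i _
  ring

/-- If `c(x) ≥ c₀ > 0`, `0 < ρ < c₀` and
`(3/2)(|∇c(x)|/c(x))|x−x₀| ≤ 1 − ρ/c₀`, then with `ψ₀(x)=|x−x₀|²`, `a(x,ξ)=c(x)|ξ|²`,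
one has `(1/4){a,{a,ψ₀}}(x,ξ) ≥ 2ρc(x)|ξ|²` for every `ξ`. -/
theorem poisson_bracket_pseudoconvexity (x₀ : EuclideanSpace ℝ (Fin 3))
    (c : EuclideanSpace ℝ (Fin 3) → ℝ) (hc : ContDiff ℝ 2 c)
    (x : EuclideanSpace ℝ (Fin 3)) (c₀ ρ : ℝ) (hc₀ : 0 < c₀) (hcx : c₀ ≤ c x)
    (hρ : ρ ∈ Set.Ioo 0 c₀)
    (hpc : 3 / 2 * (‖gradient c x‖ / c x) * ‖x - x₀‖ ≤ 1 - ρ / c₀) :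
    ∀ ξ : EuclideanSpace ℝ (Fin 3),
      2 * ρ * c x * ‖ξ‖ ^ 2 ≤
        (1 / 4) * poissonBracket (fun y η => c y * ‖η‖ ^ 2)
          (poissonBracket (fun y η => c y * ‖η‖ ^ 2) (fun y _ => ‖y - x₀‖ ^ 2)) x ξ := by
  intro ξ
  have hcd : Differentiable ℝ c := hc.differentiable two_ne_zero
  set g : E3 := gradient c x with hg
  set d : E3 := x - x₀ with hd
  -- the value of the nested bracket
  have hval : poissonBracket (fun y η => c y * ‖η‖ ^ 2)
      (poissonBracket (fun y η => c y * ‖η‖ ^ 2) (fun y _ => ‖y - x₀‖ ^ 2)) x ξ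
      = 8 * (c x) ^ 2 * ‖ξ‖ ^ 2 + 8 * c x * ⟪ξ, d⟫ * ⟪ξ, g⟫ - 4 * c x * ‖ξ‖ ^ 2 * ⟪g, d⟫ := by
    rw [poissonBracket]
    have h1 : ∀ i : Fin 3, fderiv ℝ (fun η' => c x * ‖η'‖ ^ 2) ξ (EuclideanSpace.single i 1)
        = 2 * c x * ξ i := fun i => by
      rw [aux_fderiv_const_mul_norm_sq, aux_inner_single]
    -- derivative in x of a
    have h2 : ∀ i : Fin 3, fderiv ℝ (fun y => c y * ‖ξ‖ ^ 2) x (EuclideanSpace.single i 1)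
        = g i * ‖ξ‖ ^ 2 := fun i => by
      rw [fderiv_mul_const (hcd x)]
      simp only [ContinuousLinearMap.smul_apply, smul_eq_mul]
      rw [aux_fderiv_grad, aux_inner_single, ← hg]
      ring
    -- derivative in ξ of the inner bracket
    have h3 : ∀ i : Fin 3,
        fderiv ℝ (poissonBracket (fun y η => c y * ‖η‖ ^ 2) (fun y _ => ‖y - x₀‖ ^ 2) x) ξ
          (EuclideanSpace.single i 1) = 4 * c x * d i := fun i => by
      have he : (poissonBracket (fun y η => c y * ‖η‖ ^ 2) (fun y _ => ‖y - x₀‖ ^ 2) x)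
          = fun η => 4 * c x * ⟪η, x - x₀⟫ := funext fun η => inner_bracket_eq x₀ c x η
      rw [he]
      have he2 : (fun η : E3 => 4 * c x * ⟪η, x - x₀⟫)
          = fun η : E3 => 4 * c x * ⟪(x - x₀ : E3), η⟫ :=
        funext fun η => by rw [real_inner_comm]
      rw [he2]
      have hF : HasFDerivAt (fun η : E3 => 4 * c x * ⟪(x - x₀ : E3), η⟫)
          ((4 * c x) • innerSL ℝ (x - x₀ : E3)) ξ :=
        ((innerSL ℝ (x - x₀ : E3)).hasFDerivAt).const_mul (4 * c x)
      rw [hF.fderiv]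
      simp only [ContinuousLinearMap.smul_apply, smul_eq_mul, innerSL_apply_apply]
      rw [aux_inner_single, ← hd]
    -- derivative in x of the inner bracket
    have h4 : ∀ i : Fin 3,
        fderiv ℝ (fun x' => poissonBracket (fun y η => c y * ‖η‖ ^ 2)
            (fun y _ => ‖y - x₀‖ ^ 2) x' ξ) x (EuclideanSpace.single i 1)
          = 4 * c x * ξ i + 4 * ⟪ξ, d⟫ * g i := fun i => by
      have he : (fun x' => poissonBracket (fun y η => c y * ‖η‖ ^ 2)
            (fun y _ => ‖y - x₀‖ ^ 2) x' ξ)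
          = fun x' => (4 * c x') * ⟪ξ, x' - x₀⟫ := funext fun x' => by
        rw [inner_bracket_eq, real_inner_comm]
      rw [he]
      have hF1 : HasFDerivAt (fun x' : E3 => 4 * c x') ((4:ℝ) • fderiv ℝ c x) x :=
        ((hcd x).hasFDerivAt).const_mul 4
      have hF2 : HasFDerivAt (fun y : E3 => ⟪ξ, y - x₀⟫) (innerSL ℝ ξ) x := by
        have heq : (fun y : E3 => ⟪ξ, y - x₀⟫) = fun y : E3 => ⟪ξ, y⟫ - ⟪ξ, x₀⟫ :=
          funext fun y => by rw [inner_sub_right]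
        rw [heq]
        exact ((innerSL ℝ ξ).hasFDerivAt).sub_const _
      have hF := hF1.mul hF2
      rw [(show HasFDerivAt (fun x' : E3 => 4 * c x' * ⟪ξ, x' - x₀⟫) _ x from hF).fderiv]
      simp only [ContinuousLinearMap.add_apply, ContinuousLinearMap.smul_apply,
        smul_eq_mul, innerSL_apply_apply]
      rw [aux_inner_single, aux_fderiv_grad, aux_inner_single, ← hg, ← hd, real_inner_comm d ξ]
      ring
    simp only [h1, h2, h3, h4]
    have e1 : ∑ i : Fin 3, ξ i * g i = ⟪ξ, g⟫ := (aux_real_inner_sum ξ g).symm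
    have e2 : ∑ i : Fin 3, g i * d i = ⟪g, d⟫ := (aux_real_inner_sum g d).symm
    have e3 : ∑ i : Fin 3, ξ i * ξ i = ‖ξ‖ ^ 2 := by
      rw [← real_inner_self_eq_norm_sq, aux_real_inner_sum]
    have main : (∑ i : Fin 3, (2 * c x * ξ i * (4 * c x * ξ i + 4 * ⟪ξ, d⟫ * g i)
          - g i * ‖ξ‖ ^ 2 * (4 * c x * d i)))
        = 8 * (c x) ^ 2 * (∑ i : Fin 3, ξ i * ξ i)
          + 8 * c x * ⟪ξ, d⟫ * (∑ i : Fin 3, ξ i * g i)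
          - 4 * c x * ‖ξ‖ ^ 2 * (∑ i : Fin 3, g i * d i) := by
      rw [Finset.mul_sum, Finset.mul_sum, Finset.mul_sum, ← Finset.sum_add_distrib,
        ← Finset.sum_sub_distrib]
      exact Finset.sum_congr rfl fun i _ => by ring
    rw [main, e1, e2, e3]
  rw [hval]
  -- now the inequality
  have hcpos : 0 < c x := lt_of_lt_of_le hc₀ hcx
  obtain ⟨hρ0, hρlt⟩ := hρ
  obtain ⟨t, ht0, htρ⟩ : ∃ t : ℝ, 0 ≤ t ∧ ρ = t * c₀ :=
    ⟨ρ / c₀, by positivity, (div_mul_cancel₀ ρ hc₀.ne').symm⟩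
  have hpc' : 3 / 2 * (‖g‖ / c x) * ‖d‖ ≤ 1 - t := by
    rw [htρ, mul_div_assoc, div_self hc₀.ne', mul_one] at hpc
    exact hpc
  have key : 3 * ‖g‖ * ‖d‖ ≤ 2 * c x * (1 - t) := by
    have e : 2 * c x * (3 / 2 * (‖g‖ / c x) * ‖d‖) = 3 * ‖g‖ * ‖d‖ := by
      field_simp
    have h2 := mul_le_mul_of_nonneg_left hpc' (by positivity : (0:ℝ) ≤ 2 * c x)
    rw [e] at h2
    exact h2
  have hcs1 : |⟪ξ, d⟫| ≤ ‖ξ‖ * ‖d‖ := abs_real_inner_le_norm ξ d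
  have hcs2 : |⟪ξ, g⟫| ≤ ‖ξ‖ * ‖g‖ := abs_real_inner_le_norm ξ g
  have hcs3 : ⟪g, d⟫ ≤ ‖g‖ * ‖d‖ := real_inner_le_norm g d
  have hprod : -((‖ξ‖ * ‖d‖) * (‖ξ‖ * ‖g‖)) ≤ ⟪ξ, d⟫ * ⟪ξ, g⟫ := by
    have h : |⟪ξ, d⟫ * ⟪ξ, g⟫| ≤ (‖ξ‖ * ‖d‖) * (‖ξ‖ * ‖g‖) := by
      rw [abs_mul]
      exact mul_le_mul hcs1 hcs2 (abs_nonneg _) (by positivity)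
    exact (abs_le.1 h).1
  have hk2 : (0:ℝ) ≤ ‖ξ‖ ^ 2 := sq_nonneg _
  rw [htρ]
  nlinarith [mul_le_mul_of_nonneg_left key (mul_nonneg hcpos.le hk2),
    mul_le_mul_of_nonneg_left hprod (by positivity : (0:ℝ) ≤ 2 * c x),
    mul_le_mul_of_nonneg_left hcs3 (mul_nonneg hcpos.le hk2),
    mul_nonneg (mul_nonneg ht0 (mul_nonneg hcpos.le hk2)) (sub_nonneg.2 hcx),
    hcpos, hk2]
end
end

section
/- Let M > 0, C₁ > 0, β > 0 and s₀ > 0. Then there exist constants C′ > 0 and κ ∈ (0,1), depending only on M, C₁, β and s₀, with the following property: whenever A ≥ 0 and B ≥ 0 satisfy A ≤ M and A ≤ e^{C₁ s} B + s³ e^{−β s} M for every s ≥ s₀, one has A ≤ C′ B^{κ}. -/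
/-- Optimization in the Carleman parameter: if `0 ≤ A ≤ M` and
`A ≤ e^{C₁s}B + s³e^{−βs}M` for all `s ≥ s₀`, then `A ≤ C′ B^κ` for some constants
`C′ > 0` and `κ ∈ (0,1)` depending only on `M, C₁, β, s₀`. -/
theorem carleman_parameter_optimization (M C₁ β s₀ : ℝ)
    (hM : 0 < M) (hC₁ : 0 < C₁) (hβ : 0 < β) (hs₀ : 0 < s₀) :
    ∃ C' : ℝ, 0 < C' ∧ ∃ κ : ℝ, κ ∈ Set.Ioo (0 : ℝ) 1 ∧
      ∀ A B : ℝ, 0 ≤ A → 0 ≤ B → A ≤ M →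
        (∀ s : ℝ, s₀ ≤ s → A ≤ Real.exp (C₁ * s) * B + s ^ 3 * Real.exp (-β * s) * M) →
        A ≤ C' * B ^ κ := by
  have hc : (0:ℝ) < C₁ + β/2 := by positivity
  set c : ℝ := C₁ + β/2 with hc_def
  set κ : ℝ := (β/2)/c with hκ_def
  have hκ0 : 0 < κ := by positivity
  have hκ1 : κ < 1 := by
    rw [hκ_def, div_lt_one hc, hc_def]; linarith
  set K : ℝ := (6/β)^3 with hK_def
  have hK : 0 < K := by positivity
  refine ⟨(1 + K*M) + M * Real.exp (β/2 * s₀), by positivity, κ, ⟨hκ0, hκ1⟩, ?_⟩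
  intro A B hA hB hAM h
  rcases hB.eq_or_lt with hB0 | hB0
  · -- B = 0
    have ht : Filter.Tendsto (fun s : ℝ => s ^ 3 * Real.exp (-β*s) * M)
        Filter.atTop (nhds 0) := by
      have h1 : Filter.Tendsto (fun s : ℝ => β * s) Filter.atTop Filter.atTop :=
        Filter.Tendsto.const_mul_atTop hβ Filter.tendsto_id
      have h2 := ((Real.tendsto_pow_mul_exp_neg_atTop_nhds_zero 3).comp h1).mul_const (M/β^3)
      have heq : (fun s : ℝ => ((fun x : ℝ => x ^ 3 * Real.exp (-x)) ∘ fun s : ℝ => β * s) s * (M/β^3))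
          = fun s : ℝ => s ^ 3 * Real.exp (-β*s) * M := by
        funext s
        simp only [Function.comp]
        rw [neg_mul]
        field_simp
      rw [heq] at h2
      simpa using h2
    have hA0 : A ≤ 0 := by
      refine ge_of_tendsto ht ?_
      filter_upwards [Filter.eventually_ge_atTop s₀] with s hs
      have := h s hs
      rw [← hB0] at this
      simpa using this
    have hAz : A = 0 := le_antisymm hA0 hA
    rw [hAz, ← hB0, Real.zero_rpow hκ0.ne']
    simp
  · -- B > 0
    by_cases hBb : Real.exp (-(c*s₀)) ≤ B
    · -- large B
      have h1 : Real.exp (-(c*s₀)) ^ κ ≤ B ^ κ :=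
        Real.rpow_le_rpow (Real.exp_pos _).le hBb hκ0.le
      have h2 : Real.exp (-(c*s₀)) ^ κ = Real.exp (-(β/2 * s₀)) := by
        rw [Real.rpow_def_of_pos (Real.exp_pos _), Real.log_exp]
        congr 1
        rw [hκ_def, hc_def]
        field_simp
      have h3 : A ≤ M * Real.exp (β/2*s₀) * B ^ κ := by
        calc A ≤ M := hAM
          _ = M * Real.exp (β/2*s₀) * Real.exp (-(β/2*s₀)) := by
              rw [mul_assoc, ← Real.exp_add]; simp
          _ ≤ M * Real.exp (β/2*s₀) * B ^ κ := by
              rw [← h2]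
              exact mul_le_mul_of_nonneg_left h1 (by positivity)
      have hBκ : 0 ≤ B ^ κ := Real.rpow_nonneg hB κ
      calc A ≤ M * Real.exp (β/2*s₀) * B ^ κ := h3
        _ ≤ ((1 + K*M) + M * Real.exp (β/2 * s₀)) * B ^ κ := by
            apply mul_le_mul_of_nonneg_right _ hBκ
            nlinarith [Real.exp_pos (β/2*s₀)]
    · -- small B
      push_neg at hBb
      have hLneg : Real.log B < -(c*s₀) := (Real.log_lt_iff_lt_exp hB0).mpr hBb
      set L := Real.log B with hL
      set s := -L/c with hs_def
      have hss₀ : s₀ ≤ s := by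
        rw [hs_def, le_div_iff₀ hc]
        nlinarith
      have hspos : 0 < s := lt_of_lt_of_le hs₀ hss₀
      have key := h s hss₀
      have e1 : Real.exp (C₁*s) * B = B ^ κ := by
        rw [Real.rpow_def_of_pos hB0, ← hL]
        conv_lhs => rw [show B = Real.exp L by rw [hL, Real.exp_log hB0]]
        rw [← Real.exp_add]
        congr 1
        rw [hs_def, hκ_def, hc_def]
        field_simp
        ring
      have e2 : Real.exp (-(β/2)*s) = B ^ κ := by
        rw [Real.rpow_def_of_pos hB0, ← hL]
        congr 1
        rw [hs_def, hκ_def, hc_def]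
        field_simp
      have hx : β*s/6 ≤ Real.exp (β*s/6) := by
        linarith [Real.add_one_le_exp (β*s/6)]
      have hs6 : s ≤ 6/β * Real.exp (β*s/6) := by
        have := mul_le_mul_of_nonneg_left hx (le_of_lt (show (0:ℝ) < 6/β by positivity))
        calc s = 6/β * (β*s/6) := by field_simp
          _ ≤ 6/β * Real.exp (β*s/6) := this
      have hcube : s ^ 3 ≤ K * Real.exp (β*s/2) := by
        have h1 : s ^ 3 ≤ (6/β * Real.exp (β*s/6)) ^ 3 :=
          pow_le_pow_left₀ hspos.le hs6 3
        have h2 : (6/β * Real.exp (β*s/6)) ^ 3 = K * Real.exp (β*s/2) := by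
          rw [mul_pow, hK_def]
          congr 1
          rw [← Real.exp_nat_mul]
          congr 1
          push_cast
          ring
        linarith [h1, h2.le, h2.ge]
      have h3 : s ^ 3 * Real.exp (-β*s) ≤ K * Real.exp (-(β/2)*s) := by
        have := mul_le_mul_of_nonneg_right hcube (Real.exp_pos (-β*s)).le
        calc s ^ 3 * Real.exp (-β*s) ≤ K * Real.exp (β*s/2) * Real.exp (-β*s) := this
          _ = K * Real.exp (-(β/2)*s) := by rw [mul_assoc, ← Real.exp_add]; ring_nf
      have hBκ : 0 ≤ B ^ κ := Real.rpow_nonneg hB κ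
      calc A ≤ Real.exp (C₁*s) * B + s ^ 3 * Real.exp (-β*s) * M := key
        _ ≤ B ^ κ + K * Real.exp (-(β/2)*s) * M := by
            rw [e1]
            have := mul_le_mul_of_nonneg_right h3 hM.le
            linarith
        _ = (1 + K*M) * B ^ κ := by rw [e2]; ring
        _ ≤ ((1 + K*M) + M * Real.exp (β/2 * s₀)) * B ^ κ := by
            apply mul_le_mul_of_nonneg_right _ hBκ
            nlinarith [Real.exp_pos (β/2*s₀)]
end
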